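/- If A and B both lie in 𝔄₊, or both lie in 𝔄₋, then Θ(Θ(A) ∘ B) = Θ(B) ∘ A. In particular, Θ permutes the basis of 𝔄: Θ(Θ(C_𝔍) ∘ C_{𝔍'}) = Θ(C_{𝔍'}) ∘ C_𝔍 for all 𝔍, 𝔍' ∈ 𝒫₊. -/

import Mathlib

open ComplexOrder

noncomputable section

/-- The setting of the paper: a finite set `Λ` with a fixed-point free involution `ϑ`
exchanging `Λp` and its complement, the Clifford algebra (algebra of Majoranas) `carrier`
with self-adjoint generators `c i`, the global gauge automorphism `gauge`, the antilinear
reflection `*`-automorphism `Θ`, a square root `ζ` of `-1`, the twisted product `twist`,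
a choice `P` of orderings of the subsets of `Λp` (giving the bases
`{C J : J ∈ P}` of `𝔄₊` and `{Θ(C J) ∘ C J' : J, J' ∈ P}` of `𝔄`),
and the tracial state `Tr` picking out the coefficient of `1` in the basis expansion. -/
structure MajoranaSetting where
  Λ : Type
  [fintypeΛ : Fintype Λ]
  [deceqΛ : DecidableEq Λ]
  ϑ : Λ → Λ
  ϑ_invol : Function.Involutive ϑ
  ϑ_fixfree : ∀ i, ϑ i ≠ i
  Λp : Finset Λ
  ϑ_exch : ∀ i, i ∈ Λp ↔ ϑ i ∉ Λp
  carrier : Type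
  [nring : NormedRing carrier]
  [nalg : NormedAlgebra ℂ carrier]
  [cmpl : CompleteSpace carrier]
  [starring : StarRing carrier]
  [starmod : StarModule ℂ carrier]
  c : Λ → carrier
  c_star : ∀ i, star (c i) = c i
  clifford : ∀ i j, c i * c j + c j * c i = if i = j then (2 : carrier) else 0
  gauge : carrier ≃ₐ[ℂ] carrier
  gauge_c : ∀ i, gauge (c i) = - c i
  Θ : carrier → carrier
  Θ_add : ∀ x y, Θ (x + y) = Θ x + Θ y
  Θ_smul : ∀ (z : ℂ) (x), Θ (z • x) = (starRingEnd ℂ z) • Θ x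
  Θ_mul : ∀ x y, Θ (x * y) = Θ x * Θ y
  Θ_star : ∀ x, Θ (star x) = star (Θ x)
  Θ_invol : ∀ x, Θ (Θ x) = x
  Θ_c : ∀ i, Θ (c i) = c (ϑ i)
  ζ : ℂ
  ζ_sq : ζ ^ 2 = -1
  twist : carrier → carrier → carrier
  twist_add_left : ∀ x x' y, twist (x + x') y = twist x y + twist x' y
  twist_add_right : ∀ x y y', twist x (y + y') = twist x y + twist x y'
  twist_smul_left : ∀ (z : ℂ) (x y), twist (z • x) y = z • twist x y
  twist_smul_right : ∀ (z : ℂ) (x y), twist x (z • y) = z • twist x y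
  twist_spec : ∀ (Am Ap Bm Bp : carrier) (a b a' b' : ℕ),
    a ≤ 1 → b ≤ 1 → a' ≤ 1 → b' ≤ 1 →
    Am ∈ Algebra.adjoin ℂ (c '' {i | i ∉ Λp}) →
    Ap ∈ Algebra.adjoin ℂ (c '' {i | i ∈ Λp}) →
    Bm ∈ Algebra.adjoin ℂ (c '' {i | i ∉ Λp}) →
    Bp ∈ Algebra.adjoin ℂ (c '' {i | i ∈ Λp}) →
    gauge Am = ((-1 : ℂ) ^ a) • Am →
    gauge Ap = ((-1 : ℂ) ^ b) • Ap →
    gauge Bm = ((-1 : ℂ) ^ a') • Bm →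
    gauge Bp = ((-1 : ℂ) ^ b') • Bp →
    twist (Am * Ap) (Bm * Bp)
      = ζ ^ ((a * b' : ℤ) - (b * a' : ℤ)) • (Am * Ap * (Bm * Bp))
  P : Finset (List Λ)
  P_nodup : ∀ J ∈ P, J.Nodup
  P_sub : ∀ J ∈ P, ∀ i ∈ J, i ∈ Λp
  P_unique : ∀ s : Finset Λ, s ⊆ Λp → ∃! J, J ∈ P ∧ J.toFinset = s
  Tr : carrier →ₗ[ℂ] ℂ
  Tr_basis : ∀ J ∈ P, ∀ J' ∈ P,
    Tr (twist (Θ ((J.map c).prod)) ((J'.map c).prod))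
      = if J = [] ∧ J' = [] then 1 else 0
  basis_indep : LinearIndependent ℂ
    (fun p : {J // J ∈ P} × {J // J ∈ P} =>
      twist (Θ ((p.1.1.map c).prod)) ((p.2.1.map c).prod))
  basis_span : ∀ x : carrier, x ∈ Submodule.span ℂ
    (Set.range fun p : {J // J ∈ P} × {J // J ∈ P} =>
      twist (Θ ((p.1.1.map c).prod)) ((p.2.1.map c).prod))
  plus_span : ∀ x ∈ Algebra.adjoin ℂ (c '' {i | i ∈ Λp}),
    x ∈ Submodule.span ℂ (Set.range fun J : {J // J ∈ P} => ((J.1.map c).prod))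

attribute [instance] MajoranaSetting.fintypeΛ MajoranaSetting.deceqΛ
  MajoranaSetting.nring MajoranaSetting.nalg MajoranaSetting.cmpl
  MajoranaSetting.starring MajoranaSetting.starmod

namespace MajoranaSetting

variable (S : MajoranaSetting)

/-- The subalgebra `𝔄₊` generated by the Majoranas on the `+` side. -/
def Aplus : Subalgebra ℂ S.carrier := Algebra.adjoin ℂ (S.c '' {i | i ∈ S.Λp})

/-- The subalgebra `𝔄₋` generated by the Majoranas on the `-` side. -/
def Aminus : Subalgebra ℂ S.carrier := Algebra.adjoin ℂ (S.c '' {i | i ∉ S.Λp})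

/-- The monomial `C_𝔍 = c_{i₁} ⋯ c_{i_k}`. -/
def C (J : List S.Λ) : S.carrier := (J.map S.c).prod

/-- `q_𝔍 = (-1)^{k(k-1)/2}`. -/
def q (J : List S.Λ) : ℂ := (-1 : ℂ) ^ (J.length * (J.length - 1) / 2)

/-- `s_𝔍 = ζ^{k(k-1)/2}`. -/
def sgn (J : List S.Λ) : ℂ := S.ζ ^ (J.length * (J.length - 1) / 2)

/-- The exponential `e^x` in the (finite-dimensional) algebra `𝔄`. -/
def expm (x : S.carrier) : S.carrier := NormedSpace.exp x

/-- The Hamiltonian `H = -∑_{𝔍,𝔍' ∈ 𝒫₊} J_{𝔍𝔍'} Θ(C_𝔍) ∘ C_𝔍'`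
determined by coupling constants `Jc`. -/
def Ham (Jc : List S.Λ → List S.Λ → ℂ) : S.carrier :=
  - ∑ J ∈ S.P, ∑ J' ∈ S.P, Jc J J' • S.twist (S.Θ (S.C J)) (S.C J')

/-- The index type of the basis `{C J : J ∈ 𝒫₊}`. -/
abbrev PIdx := {J : List S.Λ // J ∈ S.P}

/-- The index type `𝒫₊ - {∅}` of couplings across the reflection plane. -/
abbrev PIdx0 := {p : S.PIdx // p.1 ≠ []}

/-- The full matrix of coupling constants. -/
def Jmat (Jc : List S.Λ → List S.Λ → ℂ) : Matrix S.PIdx S.PIdx ℂ :=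
  Matrix.of fun p q => Jc p.1 q.1

/-- The matrix `J⁰` of coupling constants across the reflection plane. -/
def Jmat0 (Jc : List S.Λ → List S.Λ → ℂ) : Matrix S.PIdx0 S.PIdx0 ℂ :=
  Matrix.of fun p q => Jc p.1.1 q.1.1

end MajoranaSetting

/-! On monomials `A = C_𝔍`, `B = C_𝔍'` the element `Θ(A)` lies in `𝔄₋` and `B` in `𝔄₊`, so
`Θ(A) ∘ B = ζ^{ab} Θ(A) B` with `a, b` the parities. Applying `Θ` conjugates `ζ^{ab}` to
`(-ζ)^{ab}`, and the sign `(-1)^{ab}` is exactly what it costs to move the anticommuting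
monomials `A` and `Θ(B)` past each other. Both sides are sesquilinear in `(A, B)`, so the
identity passes to the span `𝔄₊` of the monomials; for `𝔄₋` one runs the same argument with
the monomials `Θ(C_𝔍)`, which span `𝔄₋ = Θ(𝔄₊)`. -/

namespace MajoranaSetting

variable (S : MajoranaSetting)

def Θₗ : S.carrier →ₗ⋆[ℂ] S.carrier where
  toFun := S.Θ
  map_add' := S.Θ_add
  map_smul' := S.Θ_smul

def twistₗ : S.carrier →ₗ[ℂ] S.carrier →ₗ[ℂ] S.carrier :=
  LinearMap.mk₂ ℂ S.twist S.twist_add_left S.twist_smul_left S.twist_add_right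
    S.twist_smul_right

lemma conj_ζ_zpow_mul_neg_one_pow {n : ℤ} {m : ℕ} (h : Even (n + m)) :
    starRingEnd ℂ (S.ζ ^ n) * (-1) ^ m = S.ζ ^ n := by
  have hconj : starRingEnd ℂ S.ζ = -S.ζ := by
    have h : (S.ζ - Complex.I) * (S.ζ + Complex.I) = 0 := by
      linear_combination S.ζ_sq - Complex.I_sq
    rcases mul_eq_zero.mp h with h | h
    · rw [eq_of_sub_eq_zero h, Complex.conj_I]
    · rw [eq_neg_of_add_eq_zero_left h, map_neg, Complex.conj_I]
  rw [map_zpow₀, hconj, neg_eq_neg_one_mul, mul_zpow, ← zpow_natCast, mul_right_comm,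
    ← zpow_add₀ (by norm_num), h.neg_one_zpow, one_mul]

variable {S}

lemma Θ_zero : S.Θ 0 = 0 := S.Θₗ.map_zero

lemma Θ_one : S.Θ 1 = 1 := by
  simpa only [mul_one, S.Θ_invol, one_mul] using (S.Θ_mul (S.Θ 1) 1).symm

lemma twist_zero_left (y : S.carrier) : S.twist 0 y = 0 := S.twistₗ.map_zero₂ y

lemma twist_zero_right (x : S.carrier) : S.twist x 0 = 0 := (S.twistₗ x).map_zero

lemma Θ_twist_Θ_eq_of_twist_eq_smul {A B : S.carrier} {w s : ℂ}
    (hAB : S.twist (S.Θ A) B = w • (S.Θ A * B)) (hBA : S.twist (S.Θ B) A = w • (S.Θ B * A))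
    (hcomm : A * S.Θ B = s • (S.Θ B * A)) (hw : starRingEnd ℂ w * s = w) :
    S.Θ (S.twist (S.Θ A) B) = S.twist (S.Θ B) A := by
  rw [hAB, hBA, S.Θ_smul, S.Θ_mul, S.Θ_invol, hcomm, smul_smul, hw]

lemma Θ_twist_Θ_eq_of_mem_span {s : Set S.carrier}
    (hs : ∀ x ∈ s, ∀ y ∈ s, S.Θ (S.twist (S.Θ x) y) = S.twist (S.Θ y) x)
    {A B : S.carrier} (hA : A ∈ Submodule.span ℂ s) (hB : B ∈ Submodule.span ℂ s) :
    S.Θ (S.twist (S.Θ A) B) = S.twist (S.Θ B) A := by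
  induction hA, hB using Submodule.span_induction₂ with
  | mem_mem x y hx hy => exact hs x hx y hy
  | zero_left y _ => rw [Θ_zero, twist_zero_left, Θ_zero, twist_zero_right]
  | zero_right x _ => rw [twist_zero_right, Θ_zero, twist_zero_left]
  | add_left x y z _ _ _ hxz hyz =>
    rw [S.Θ_add, S.twist_add_left, S.Θ_add, hxz, hyz, S.twist_add_right]
  | add_right x y z _ _ _ hxy hxz =>
    rw [S.twist_add_right, S.Θ_add, hxy, hxz, S.Θ_add, S.twist_add_left]
  | smul_left r x y _ _ h =>
    rw [S.Θ_smul, S.twist_smul_left, S.Θ_smul, Complex.conj_conj, h, S.twist_smul_right]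
  | smul_right r x y _ _ h =>
    rw [S.twist_smul_right, S.Θ_smul, h, S.Θ_smul, S.twist_smul_left]

lemma C_cons (i : S.Λ) (J : List S.Λ) : S.C (i :: J) = S.c i * S.C J := by
  simp only [C, List.map_cons, List.prod_cons]

lemma Θ_C (J : List S.Λ) : S.Θ (S.C J) = S.C (J.map S.ϑ) := by
  induction J with
  | nil => exact S.Θ_one
  | cons i J ih => rw [C_cons, S.Θ_mul, S.Θ_c, ih, List.map_cons, C_cons]

lemma gauge_C (J : List S.Λ) : S.gauge (S.C J) = (-1 : ℂ) ^ (J.length % 2) • S.C J := by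
  rw [← neg_one_pow_eq_pow_mod_two]
  induction J with
  | nil => simp [C]
  | cons i J ih =>
    rw [C_cons, map_mul, S.gauge_c, ih, List.length_cons, pow_succ', neg_one_mul, neg_mul,
      mul_smul_comm, neg_smul]

lemma gauge_Θ_C (J : List S.Λ) :
    S.gauge (S.Θ (S.C J)) = (-1 : ℂ) ^ (J.length % 2) • S.Θ (S.C J) := by
  rw [Θ_C, gauge_C, List.length_map]

lemma C_mem_adjoin {s : Set S.Λ} {J : List S.Λ} (hJ : ∀ i ∈ J, i ∈ s) :
    S.C J ∈ Algebra.adjoin ℂ (S.c '' s) :=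
  Subalgebra.list_prod_mem _ fun _ hx => by
    obtain ⟨i, hi, rfl⟩ := List.mem_map.mp hx
    exact Algebra.subset_adjoin ⟨i, hJ i hi, rfl⟩

lemma Θ_mem_adjoin {s t : Set S.Λ} (hst : ∀ i ∈ s, S.ϑ i ∈ t) {x : S.carrier}
    (hx : x ∈ Algebra.adjoin ℂ (S.c '' s)) : S.Θ x ∈ Algebra.adjoin ℂ (S.c '' t) := by
  induction hx using Algebra.adjoin_induction with
  | mem y hy =>
    obtain ⟨i, hi, rfl⟩ := hy
    rw [S.Θ_c]
    exact Algebra.subset_adjoin ⟨S.ϑ i, hst i hi, rfl⟩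
  | algebraMap r =>
    rw [Algebra.algebraMap_eq_smul_one, S.Θ_smul, Θ_one]
    exact Subalgebra.smul_mem _ (one_mem _) _
  | add x y _ _ hx hy => rw [S.Θ_add]; exact add_mem hx hy
  | mul x y _ _ hx hy => rw [S.Θ_mul]; exact mul_mem hx hy

lemma C_mem_Aplus {J : List S.Λ} (hJ : ∀ i ∈ J, i ∈ S.Λp) : S.C J ∈ S.Aplus :=
  C_mem_adjoin hJ

lemma Θ_C_mem_Aminus {J : List S.Λ} (hJ : ∀ i ∈ J, i ∈ S.Λp) : S.Θ (S.C J) ∈ S.Aminus :=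
  Θ_mem_adjoin (fun i hi => (S.ϑ_exch i).mp hi) (C_mem_adjoin hJ)

lemma Θ_mem_Aplus_of_mem_Aminus {x : S.carrier} (hx : x ∈ S.Aminus) : S.Θ x ∈ S.Aplus :=
  Θ_mem_adjoin (fun i hi => (S.ϑ_exch (S.ϑ i)).mpr (by rwa [S.ϑ_invol i])) hx

lemma disjoint_map_ϑ {J J' : List S.Λ} (hJ : ∀ i ∈ J, i ∈ S.Λp) (hJ' : ∀ i ∈ J', i ∈ S.Λp) :
    J.Disjoint (J'.map S.ϑ) := by
  intro i hi hi'
  obtain ⟨j, hj, rfl⟩ := List.mem_map.mp hi'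
  exact (S.ϑ_exch j).mp (hJ' j hj) (hJ _ hi)

lemma c_mul_C_of_not_mem {i : S.Λ} {J : List S.Λ} (hi : i ∉ J) :
    S.c i * S.C J = (-1 : ℂ) ^ J.length • (S.C J * S.c i) := by
  induction J with
  | nil => simp [C]
  | cons j J ih =>
    have hij : S.c i * S.c j = -(S.c j * S.c i) := by
      have := S.clifford i j
      rw [if_neg (List.ne_of_not_mem_cons hi)] at this
      exact eq_neg_of_add_eq_zero_left this
    rw [C_cons, ← mul_assoc, hij, neg_mul, mul_assoc, ih (List.not_mem_of_not_mem_cons hi),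
      mul_smul_comm, ← mul_assoc, List.length_cons, pow_succ, mul_comm _ (-1 : ℂ), mul_smul,
      neg_one_smul]

lemma C_mul_C_of_disjoint {K M : List S.Λ} (h : K.Disjoint M) :
    S.C K * S.C M = (-1 : ℂ) ^ (K.length * M.length) • (S.C M * S.C K) := by
  induction K with
  | nil => simp [C]
  | cons i K ih =>
    rw [C_cons, mul_assoc, ih (List.disjoint_of_disjoint_cons_left h), mul_smul_comm,
      ← mul_assoc, c_mul_C_of_not_mem (List.disjoint_cons_left.mp h).1, smul_mul_assoc,
      smul_smul, mul_assoc, ← C_cons, List.length_cons, ← pow_add, add_one_mul, add_comm]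

lemma twist_eq_of_mem_Aminus_of_mem_Aplus {x y : S.carrier} {a b : ℕ} (ha : a ≤ 1) (hb : b ≤ 1)
    (hx : x ∈ S.Aminus) (hy : y ∈ S.Aplus) (hgx : S.gauge x = (-1 : ℂ) ^ a • x)
    (hgy : S.gauge y = (-1 : ℂ) ^ b • y) : S.twist x y = S.ζ ^ ((a : ℤ) * b) • (x * y) := by
  simpa using S.twist_spec x 1 1 y a 0 0 b ha zero_le_one zero_le_one hb hx (one_mem _)
    (one_mem _) hy hgx (by simp) (by simp) hgy

lemma twist_eq_of_mem_Aplus_of_mem_Aminus {x y : S.carrier} {a b : ℕ} (ha : a ≤ 1) (hb : b ≤ 1)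
    (hx : x ∈ S.Aplus) (hy : y ∈ S.Aminus) (hgx : S.gauge x = (-1 : ℂ) ^ a • x)
    (hgy : S.gauge y = (-1 : ℂ) ^ b • y) : S.twist x y = S.ζ ^ (-((a : ℤ) * b)) • (x * y) := by
  simpa using S.twist_spec 1 x y 1 0 a b 0 zero_le_one ha hb zero_le_one (one_mem _) hx hy
    (one_mem _) (by simp) hgx hgy (by simp)

lemma even_mod_two_mul_mod_two_add_mul (m n : ℕ) :
    Even (((m % 2 : ℕ) : ℤ) * (n % 2 : ℕ) + (m * n : ℕ)) := by
  have h : Even (m % 2 * (n % 2) + m * n) := by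
    rw [Nat.even_add, Nat.even_mul, Nat.even_mul]
    simp only [Nat.even_iff]
    omega
  exact_mod_cast h

lemma Θ_twist_Θ_C {J J' : List S.Λ} (hJ : ∀ i ∈ J, i ∈ S.Λp) (hJ' : ∀ i ∈ J', i ∈ S.Λp) :
    S.Θ (S.twist (S.Θ (S.C J)) (S.C J')) = S.twist (S.Θ (S.C J')) (S.C J) := by
  have hpar (K : List S.Λ) : K.length % 2 ≤ 1 := by omega
  refine Θ_twist_Θ_eq_of_twist_eq_smul
    (twist_eq_of_mem_Aminus_of_mem_Aplus (hpar J) (hpar J') (Θ_C_mem_Aminus hJ)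
      (C_mem_Aplus hJ') (gauge_Θ_C J) (gauge_C J'))
    ?_ ?_ (S.conj_ζ_zpow_mul_neg_one_pow (even_mod_two_mul_mod_two_add_mul J.length J'.length))
  · rw [mul_comm]
    exact twist_eq_of_mem_Aminus_of_mem_Aplus (hpar J') (hpar J) (Θ_C_mem_Aminus hJ')
      (C_mem_Aplus hJ) (gauge_Θ_C J') (gauge_C J)
  · rw [Θ_C, ← List.length_map (as := J') S.ϑ]
    exact C_mul_C_of_disjoint (disjoint_map_ϑ hJ hJ')

lemma Θ_twist_Θ_Θ_C {J J' : List S.Λ} (hJ : ∀ i ∈ J, i ∈ S.Λp) (hJ' : ∀ i ∈ J', i ∈ S.Λp) :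
    S.Θ (S.twist (S.Θ (S.Θ (S.C J))) (S.Θ (S.C J'))) =
      S.twist (S.Θ (S.Θ (S.C J'))) (S.Θ (S.C J)) := by
  have hpar (K : List S.Λ) : K.length % 2 ≤ 1 := by omega
  have heven : Even (-(((J.length % 2 : ℕ) : ℤ) * (J'.length % 2 : ℕ)) +
      (J.length * J'.length : ℕ)) := by
    simpa [Int.even_add] using even_mod_two_mul_mod_two_add_mul J.length J'.length
  refine Θ_twist_Θ_eq_of_twist_eq_smul ?_ ?_ ?_ (S.conj_ζ_zpow_mul_neg_one_pow heven)
  · rw [S.Θ_invol]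
    exact twist_eq_of_mem_Aplus_of_mem_Aminus (hpar J) (hpar J') (C_mem_Aplus hJ)
      (Θ_C_mem_Aminus hJ') (gauge_C J) (gauge_Θ_C J')
  · rw [S.Θ_invol, mul_comm]
    exact twist_eq_of_mem_Aplus_of_mem_Aminus (hpar J') (hpar J) (C_mem_Aplus hJ')
      (Θ_C_mem_Aminus hJ) (gauge_C J') (gauge_Θ_C J)
  · rw [S.Θ_invol, Θ_C, ← List.length_map (as := J) S.ϑ]
    exact C_mul_C_of_disjoint (disjoint_map_ϑ hJ' hJ).symm

lemma mem_span_Θ_C_of_mem_Aminus {x : S.carrier} (hx : x ∈ S.Aminus) :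
    x ∈ Submodule.span ℂ (S.Θₗ '' Set.range fun J : S.PIdx => S.C J) := by
  rw [← Submodule.map_span, ← S.Θ_invol x]
  exact Submodule.mem_map_of_mem (S.plus_span _ (Θ_mem_Aplus_of_mem_Aminus hx))

end MajoranaSetting

/-- if `A, B` both lie in `𝔄₊`, or both lie in `𝔄₋`, then
`Θ(Θ(A) ∘ B) = Θ(B) ∘ A`; in particular `Θ` permutes the basis:
`Θ(Θ(C_𝔍) ∘ C_𝔍') = Θ(C_𝔍') ∘ C_𝔍` for `𝔍, 𝔍' ∈ 𝒫₊`. -/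
theorem reflection_permutes_basis (S : MajoranaSetting) :
    (∀ A B : S.carrier,
      (A ∈ S.Aplus ∧ B ∈ S.Aplus) ∨ (A ∈ S.Aminus ∧ B ∈ S.Aminus) →
      S.Θ (S.twist (S.Θ A) B) = S.twist (S.Θ B) A) ∧
    (∀ J ∈ S.P, ∀ J' ∈ S.P,
      S.Θ (S.twist (S.Θ (S.C J)) (S.C J')) = S.twist (S.Θ (S.C J')) (S.C J)) := by
  refine ⟨?_, fun J hJ J' hJ' => S.Θ_twist_Θ_C (S.P_sub J hJ) (S.P_sub J' hJ')⟩
  rintro A B (⟨hA, hB⟩ | ⟨hA, hB⟩)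
  · refine S.Θ_twist_Θ_eq_of_mem_span ?_ (S.plus_span A hA) (S.plus_span B hB)
    rintro _ ⟨⟨J, hJ⟩, rfl⟩ _ ⟨⟨J', hJ'⟩, rfl⟩
    exact S.Θ_twist_Θ_C (S.P_sub J hJ) (S.P_sub J' hJ')
  · refine S.Θ_twist_Θ_eq_of_mem_span ?_ (S.mem_span_Θ_C_of_mem_Aminus hA)
      (S.mem_span_Θ_C_of_mem_Aminus hB)
    rintro _ ⟨_, ⟨⟨J, hJ⟩, rfl⟩, rfl⟩ _ ⟨_, ⟨⟨J', hJ'⟩, rfl⟩, rfl⟩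
    exact S.Θ_twist_Θ_Θ_C (S.P_sub J hJ) (S.P_sub J' hJ')
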